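/- Let γ ∈ (0,2] and let (n_k)_{k≥0} be a nondecreasing sequence of positive integers with n_k → ∞ and sup_k n_{k+1}/n_k < ∞. Then the following are equivalent: (1) V(n_k)/n_k^γ → 0 as k → ∞; (2) G(x)/x^{2−γ} → 0 as x → 0⁺; (3) V(n)/n^γ → 0 as n → ∞. -/

import Mathlib

/-
The kernel is comparable to `n²` on `[0, π/n]` and is at most `min (n², π²/y²)` on `(0, π]`.
The first fact gives `V(n) ≥ (4/π²) n² G(π/n)`, so (1) forces `n_k^(2-γ) G(π/n_k) → 0`;
bounded ratios `n_{k+1} ≤ κ n_k` trap every small `x` as `π/n_{k+1} < x ≤ π/n_k`, which gives (2).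
Conversely, cutting `[0, π]` into `[0, 1/n]` and the dyadic shells `[2^j/n, 2^(j+1)/n]` bounds
`V(n)` by `n² G(1/n) + Σ_j π² (n/2^j)² G(2^(j+1)/n)`; when `G(x) ≤ ε x^(2-γ)` this is a geometric
series of size `O(ε n^γ)`, while the part of `μ` away from `0` contributes only `O(1)`.
Finally (3) gives (1) by passing to the subsequence.
-/
open MeasureTheory Filter Set Topology

/-- Fejér-type kernel: `I_n(y) = sin²(ny/2)/sin²(y/2)` for `y ≠ 0`, `I_n(0) = n²`. -/
noncomputable def fejerKernel (n : ℕ) (y : ℝ) : ℝ :=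
  if y = 0 then (n : ℝ) ^ 2 else Real.sin (n * y / 2) ^ 2 / Real.sin (y / 2) ^ 2

/-- Variance functional `V(n) = ∫_{[0,π]} I_n(y) dμ(y)`. -/
noncomputable def varV (μ : Measure ℝ) (n : ℕ) : ℝ :=
  ∫ y in Icc 0 Real.pi, fejerKernel n y ∂μ

/-- `G(x) = μ([0,x])` for a measure `μ` on `[0,π]`. -/
noncomputable def specG (μ : Measure ℝ) (x : ℝ) : ℝ :=
  (μ (Icc 0 x)).toReal

/-- A function `L : (0,∞) → (0,∞)` is slowly varying at infinity if
`L(λx)/L(x) → 1` as `x → ∞` for every `λ > 0`. -/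
def SlowlyVarying (L : ℝ → ℝ) : Prop :=
  ∀ lam : ℝ, 0 < lam → Tendsto (fun x => L (lam * x) / L x) atTop (𝓝 1)

open Real

lemma abs_sin_nat_mul_le (n : ℕ) (x : ℝ) : |sin (n * x)| ≤ n * |sin x| := by
  induction n with
  | zero => simp
  | succ n ih =>
    calc |sin ((n + 1 : ℕ) * x)| = |sin (n * x) * cos x + cos (n * x) * sin x| := by
          push_cast; rw [add_mul, one_mul, sin_add]
      _ ≤ |sin (n * x)| * |cos x| + |cos (n * x)| * |sin x| := by
          rw [← abs_mul, ← abs_mul]; exact abs_add_le _ _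
      _ ≤ n * |sin x| * 1 + 1 * |sin x| := by
          gcongr <;> exact abs_cos_le_one _
      _ = (n + 1 : ℕ) * |sin x| := by push_cast; ring

lemma fejerKernel_nonneg (n : ℕ) (y : ℝ) : 0 ≤ fejerKernel n y := by
  unfold fejerKernel; split <;> positivity

lemma fejerKernel_le_sq (n : ℕ) (y : ℝ) : fejerKernel n y ≤ (n : ℝ) ^ 2 := by
  unfold fejerKernel
  split
  · exact le_rfl
  · refine div_le_of_le_mul₀ (sq_nonneg _) (sq_nonneg _) ?_
    have h := abs_sin_nat_mul_le n (y / 2)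
    rw [← mul_div_assoc] at h
    rw [← sq_abs, ← sq_abs (sin (y / 2)), ← mul_pow]
    gcongr

lemma fejerKernel_le_pi_sq_div_sq (n : ℕ) {y : ℝ} (hy : 0 < y) (hyπ : y ≤ π) :
    fejerKernel n y ≤ π ^ 2 / y ^ 2 := by
  rw [fejerKernel, if_neg hy.ne']
  have hsin : y / π ≤ sin (y / 2) := by
    have := mul_le_sin (x := y / 2) (by positivity) (by linarith)
    calc y / π = 2 / π * (y / 2) := by field_simp
      _ ≤ sin (y / 2) := this
  calc sin (n * y / 2) ^ 2 / sin (y / 2) ^ 2 ≤ 1 / (y / π) ^ 2 := by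
        gcongr
        exact sin_sq_le_one _
    _ = π ^ 2 / y ^ 2 := by rw [div_pow, one_div_div]

lemma four_div_pi_sq_mul_sq_le_fejerKernel {n : ℕ} (hn : 0 < n) {y : ℝ}
    (hy : y ∈ Icc 0 (π / n)) : 4 / π ^ 2 * (n : ℝ) ^ 2 ≤ fejerKernel n y := by
  obtain ⟨hy0, hyn⟩ := hy
  have hnR : (0 : ℝ) < n := by exact_mod_cast hn
  rcases hy0.eq_or_lt with rfl | hy0
  · rw [fejerKernel, if_pos rfl]
    have : 4 / π ^ 2 ≤ 1 := by
      rw [div_le_one (by positivity)]; nlinarith [pi_gt_three]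
    nlinarith [sq_nonneg (n : ℝ)]
  rw [fejerKernel, if_neg hy0.ne']
  have hny : n * y ≤ π := by rwa [le_div_iff₀' hnR] at hyn
  have hyπ : y ≤ π := le_trans (by nlinarith [show (1 : ℝ) ≤ n by exact_mod_cast hn]) hny
  -- Jordan's inequality for the numerator, `sin t ≤ t` for the denominator
  have hnum : n * y / π ≤ sin (n * y / 2) := by
    have := mul_le_sin (x := n * y / 2) (by positivity) (by linarith)
    calc n * y / π = 2 / π * (n * y / 2) := by field_simp
      _ ≤ _ := this
  have hden : sin (y / 2) ≤ y / 2 := sin_le (by positivity)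
  have hden0 : 0 < sin (y / 2) := sin_pos_of_pos_of_lt_pi (by positivity) (by linarith)
  calc 4 / π ^ 2 * (n : ℝ) ^ 2 = (n * y / π) ^ 2 / (y / 2) ^ 2 := by
        field_simp; ring
    _ ≤ sin (n * y / 2) ^ 2 / sin (y / 2) ^ 2 := by gcongr

lemma measurable_fejerKernel (n : ℕ) : Measurable (fejerKernel n) :=
  Measurable.ite measurableSet_eq measurable_const (by fun_prop)

/-- The kernel is at most `m²` everywhere and at most `π² / (2 ^ j / m)²` on the dyadic shell
`[2 ^ j / m, 2 ^ (j + 1) / m]`. -/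
noncomputable def dyadicMajorant (m J : ℕ) (y : ℝ) : ℝ :=
  (Icc (0 : ℝ) (1 / m)).indicator (fun _ => (m : ℝ) ^ 2) y +
    ∑ j ∈ Finset.range J,
      (Icc (0 : ℝ) (2 * (2 ^ j / m))).indicator (fun _ => π ^ 2 / (2 ^ j / m) ^ 2) y

lemma fejerKernel_le_dyadicMajorant {m J : ℕ} (hm : 0 < m) (hJ : m * π < 2 ^ J) {y : ℝ}
    (hy : y ∈ Icc 0 π) : fejerKernel m y ≤ dyadicMajorant m J y := by
  obtain ⟨hy0, hyπ⟩ := hy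
  have hmR : (0 : ℝ) < m := by exact_mod_cast hm
  have hterm : ∀ j, 0 ≤ (Icc (0 : ℝ) (2 * (2 ^ j / m))).indicator
      (fun _ => π ^ 2 / (2 ^ j / m) ^ 2) y :=
    fun j => indicator_nonneg (fun _ _ => by positivity) _
  by_cases hy1 : y ≤ 1 / m
  · rw [dyadicMajorant, indicator_of_mem (mem_Icc.2 ⟨hy0, hy1⟩)]
    linarith [fejerKernel_le_sq m y, Finset.sum_nonneg fun j (_ : j ∈ Finset.range J) => hterm j]
  rw [not_le, div_lt_iff₀' hmR] at hy1
  obtain ⟨j, hjy, hyj⟩ := exists_nat_pow_near hy1.le one_lt_two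
  have hjJ : j < J := (pow_lt_pow_iff_right₀ one_lt_two).1 <|
    hjy.trans_lt ((mul_le_mul_of_nonneg_left hyπ hmR.le).trans_lt hJ)
  have hxj : 2 ^ j / m ≤ y := by rwa [div_le_iff₀' hmR]
  have hyx : y ≤ 2 * (2 ^ j / m) := by
    rw [← mul_div_assoc, le_div_iff₀' hmR, ← pow_succ']; exact hyj.le
  calc fejerKernel m y ≤ π ^ 2 / (2 ^ j / m) ^ 2 :=
        (fejerKernel_le_pi_sq_div_sq m ((by positivity : (0 : ℝ) < 2 ^ j / m).trans_le hxj)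
          hyπ).trans (by gcongr)
    _ = (Icc (0 : ℝ) (2 * (2 ^ j / m))).indicator (fun _ => π ^ 2 / (2 ^ j / m) ^ 2) y := by
        rw [indicator_of_mem (mem_Icc.2 ⟨hy0, hyx⟩)]
    _ ≤ ∑ j ∈ Finset.range J,
          (Icc (0 : ℝ) (2 * (2 ^ j / m))).indicator (fun _ => π ^ 2 / (2 ^ j / m) ^ 2) y :=
        Finset.single_le_sum (fun j _ => hterm j) (Finset.mem_range.2 hjJ)
    _ ≤ dyadicMajorant m J y :=
        le_add_of_nonneg_left (indicator_nonneg (fun _ _ => by positivity) _)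

lemma dyadicMajorant_nonneg (m J : ℕ) (y : ℝ) : 0 ≤ dyadicMajorant m J y :=
  add_nonneg (indicator_nonneg (fun _ _ => by positivity) _)
    (Finset.sum_nonneg fun _ _ => indicator_nonneg (fun _ _ => by positivity) _)

lemma tendsto_zero_of_forall_eventually_le {α : Type*} {l : Filter α} {f : α → ℝ}
    (hf : ∀ᶠ x in l, 0 ≤ f x) (h : ∀ ε > 0, ∀ᶠ x in l, f x ≤ ε) : Tendsto f l (𝓝 0) :=
  Metric.tendsto_nhds.2 fun ε hε => (hf.and (h (ε / 2) (half_pos hε))).mono fun x hx => by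
    rw [Real.dist_0_eq_abs, abs_of_nonneg hx.1]; linarith [hx.2]

lemma exists_le_lt_succ_of_tendsto_atTop {u : ℕ → ℝ} (hu : Tendsto u atTop atTop) {K : ℕ} {t : ℝ}
    (hK : u K ≤ t) : ∃ k ≥ K, u k ≤ t ∧ t < u (k + 1) := by
  by_contra! h
  have hle : ∀ k ≥ K, u k ≤ t := fun k hk => Nat.le_induction hK (fun k hk => h k hk) k hk
  obtain ⟨k, hkt, hkK⟩ := ((hu.eventually_gt_atTop t).and (eventually_ge_atTop K)).exists
  exact (hle k hkK).not_gt hkt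

section Spectral

variable {μ : Measure ℝ}

lemma varV_nonneg (n : ℕ) : 0 ≤ varV μ n :=
  integral_nonneg fun y => fejerKernel_nonneg n y

lemma specG_nonneg (x : ℝ) : 0 ≤ specG μ x :=
  measureReal_nonneg

lemma specG_restrict_le_of_forall_lt {A β δ : ℝ} (hβ : 0 ≤ β) (hδ : 0 < δ)
    (hG : ∀ x ∈ Ioo 0 δ, specG μ x ≤ A * x ^ β) {x : ℝ} (hx : 0 < x) :
    specG (μ.restrict (Icc 0 (δ / 2))) x ≤ A * x ^ β := by
  have hδ2 : δ / 2 ∈ Ioo 0 δ := ⟨half_pos hδ, half_lt_self hδ⟩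
  have hA : 0 ≤ A :=
    nonneg_of_mul_nonneg_left ((specG_nonneg _).trans (hG _ hδ2)) (rpow_pos_of_pos hδ2.1 _)
  have hmin : min x (δ / 2) ∈ Ioo 0 δ := ⟨lt_min hx hδ2.1, (min_le_right _ _).trans_lt hδ2.2⟩
  show (μ.restrict _).real _ ≤ _
  rw [measureReal_restrict_apply measurableSet_Icc, Icc_inter_Icc, max_self]
  calc μ.real (Icc 0 (min x (δ / 2))) ≤ A * min x (δ / 2) ^ β := hG _ hmin
    _ ≤ A * x ^ β := by have := hmin.1; gcongr; exact min_le_left _ _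

variable [IsFiniteMeasure μ]

lemma specG_mono {x x' : ℝ} (h : x ≤ x') : specG μ x ≤ specG μ x' :=
  measureReal_mono (Icc_subset_Icc_right h)

lemma integrableOn_fejerKernel (n : ℕ) (s : Set ℝ) : IntegrableOn (fejerKernel n) s μ :=
  (integrable_const ((n : ℝ) ^ 2)).mono' (measurable_fejerKernel n).aestronglyMeasurable <|
    ae_of_all _ fun y => by
      rw [Real.norm_of_nonneg (fejerKernel_nonneg n y)]; exact fejerKernel_le_sq n y

lemma sq_mul_specG_le_varV {n : ℕ} (hn : 0 < n) :
    4 / π ^ 2 * (n : ℝ) ^ 2 * specG μ (π / n) ≤ varV μ n := by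
  have hsub : Icc 0 (π / n) ⊆ Icc 0 π :=
    Icc_subset_Icc_right (div_le_self pi_pos.le (by exact_mod_cast hn))
  calc 4 / π ^ 2 * (n : ℝ) ^ 2 * specG μ (π / n)
      ≤ ∫ y in Icc 0 (π / n), fejerKernel n y ∂μ :=
        setIntegral_ge_of_const_le_real measurableSet_Icc (measure_ne_top _ _)
          (fun _ hy => four_div_pi_sq_mul_sq_le_fejerKernel hn hy) (integrableOn_fejerKernel n _)
    _ ≤ varV μ n :=
        setIntegral_mono_set (integrableOn_fejerKernel n _)
          (ae_of_all _ fun y => fejerKernel_nonneg n y) hsub.eventuallyLE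

lemma integrable_indicator_Icc_const (a c : ℝ) : Integrable ((Icc 0 a).indicator fun _ => c) μ :=
  (integrable_const c).indicator measurableSet_Icc

lemma integrable_dyadicMajorant (m J : ℕ) : Integrable (dyadicMajorant m J) μ :=
  (integrable_indicator_Icc_const _ _).add
    (integrable_finsetSum _ fun _ _ => integrable_indicator_Icc_const _ _)

lemma integral_dyadicMajorant (m J : ℕ) :
    ∫ y, dyadicMajorant m J y ∂μ = (m : ℝ) ^ 2 * specG μ (1 / m) +
      ∑ j ∈ Finset.range J, π ^ 2 / (2 ^ j / m) ^ 2 * specG μ (2 * (2 ^ j / m)) := by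
  simp only [dyadicMajorant]
  rw [integral_add (integrable_indicator_Icc_const _ _)
      (integrable_finsetSum _ fun _ _ => integrable_indicator_Icc_const _ _),
    integral_finsetSum _ fun _ _ => integrable_indicator_Icc_const _ _]
  simp only [integral_indicator_const _ measurableSet_Icc, smul_eq_mul, specG, Measure.real,
    mul_comm]

lemma varV_le_dyadic_sum {m J : ℕ} (hm : 0 < m) (hJ : m * π < 2 ^ J) :
    varV μ m ≤ (m : ℝ) ^ 2 * specG μ (1 / m) +
      ∑ j ∈ Finset.range J, π ^ 2 / (2 ^ j / m) ^ 2 * specG μ (2 * (2 ^ j / m)) := by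
  calc varV μ m ≤ ∫ y in Icc 0 π, dyadicMajorant m J y ∂μ :=
        setIntegral_mono_on (integrableOn_fejerKernel m _)
          (integrable_dyadicMajorant m J).integrableOn measurableSet_Icc
          fun y hy => fejerKernel_le_dyadicMajorant hm hJ hy
    _ ≤ ∫ y, dyadicMajorant m J y ∂μ :=
        setIntegral_le_integral (integrable_dyadicMajorant m J)
          (ae_of_all _ (dyadicMajorant_nonneg m J))
    _ = _ := integral_dyadicMajorant m J

lemma varV_le_of_specG_le_rpow {A β : ℝ} (hβ : β < 2) (hG : ∀ x, 0 < x → specG μ x ≤ A * x ^ β)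
    {m : ℕ} (hm : 0 < m) :
    varV μ m ≤ A * (1 + π ^ 2 * 2 ^ β / (1 - 2 ^ (β - 2))) * (m : ℝ) ^ (2 - β) := by
  have hmR : (0 : ℝ) < m := by exact_mod_cast hm
  have hA : 0 ≤ A := by simpa using (specG_nonneg 1).trans (hG 1 one_pos)
  set r : ℝ := 2 ^ (β - 2)
  have hr0 : 0 < r := by positivity
  have hr1 : r < 1 := rpow_lt_one_of_one_lt_of_neg one_lt_two (by linarith)
  obtain ⟨J, hJ⟩ := pow_unbounded_of_one_lt (m * π) one_lt_two
  have hfirst : (m : ℝ) ^ 2 * specG μ (1 / m) ≤ A * (m : ℝ) ^ (2 - β) := by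
    calc (m : ℝ) ^ 2 * specG μ (1 / m) ≤ (m : ℝ) ^ 2 * (A * (1 / m) ^ β) := by
          gcongr; exact hG _ (by positivity)
      _ = A * (m : ℝ) ^ (2 - β) := by
          rw [one_div, inv_rpow hmR.le, rpow_sub hmR, rpow_two]; field_simp
  have hshell : ∀ j : ℕ, π ^ 2 / (2 ^ j / m) ^ 2 * specG μ (2 * (2 ^ j / m)) ≤
      A * π ^ 2 * 2 ^ β * (m : ℝ) ^ (2 - β) * r ^ j := by
    intro j
    have hx : (0 : ℝ) < 2 ^ j / m := by positivity
    calc π ^ 2 / (2 ^ j / m) ^ 2 * specG μ (2 * (2 ^ j / m))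
        ≤ π ^ 2 / (2 ^ j / m) ^ 2 * (A * (2 * (2 ^ j / m)) ^ β) := by
          gcongr; exact hG _ (by positivity)
      _ = A * π ^ 2 * 2 ^ β * (2 ^ j / m) ^ (β - 2) := by
          rw [mul_rpow zero_le_two hx.le, rpow_sub hx, rpow_two]; field_simp
      _ = A * π ^ 2 * 2 ^ β * (m : ℝ) ^ (2 - β) * r ^ j := by
          rw [div_rpow (by positivity) hmR.le, ← rpow_pow_comm zero_le_two, div_eq_mul_inv,
            ← rpow_neg hmR.le, neg_sub]
          ring
  have hgeom : ∑ j ∈ Finset.range J, r ^ j ≤ 1 / (1 - r) := by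
    have := geom_sum_Ico_le_of_lt_one (m := 0) (n := J) hr0.le hr1
    rwa [← Finset.range_eq_Ico, pow_zero] at this
  calc varV μ m ≤ (m : ℝ) ^ 2 * specG μ (1 / m) +
        ∑ j ∈ Finset.range J, π ^ 2 / (2 ^ j / m) ^ 2 * specG μ (2 * (2 ^ j / m)) :=
        varV_le_dyadic_sum hm hJ
    _ ≤ A * (m : ℝ) ^ (2 - β) +
        A * π ^ 2 * 2 ^ β * (m : ℝ) ^ (2 - β) * ∑ j ∈ Finset.range J, r ^ j := by
        rw [Finset.mul_sum]; exact add_le_add hfirst (Finset.sum_le_sum fun j _ => hshell j)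
    _ ≤ A * (m : ℝ) ^ (2 - β) + A * π ^ 2 * 2 ^ β * (m : ℝ) ^ (2 - β) * (1 / (1 - r)) := by
        gcongr
    _ = A * (1 + π ^ 2 * 2 ^ β / (1 - r)) * (m : ℝ) ^ (2 - β) := by ring

lemma varV_le_varV_restrict_add {δ : ℝ} (hδ : 0 < δ) (n : ℕ) :
    varV μ n ≤ varV (μ.restrict (Icc 0 δ)) n + π ^ 2 / δ ^ 2 * μ.real univ := by
  have hfar : ∀ y ∈ Icc 0 π \ Icc 0 δ, fejerKernel n y ≤ π ^ 2 / δ ^ 2 := by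
    rintro y ⟨⟨hy0, hyπ⟩, hyδ⟩
    have hδy : δ < y := lt_of_not_ge fun h => hyδ ⟨hy0, h⟩
    exact (fejerKernel_le_pi_sq_div_sq n (hδ.trans hδy) hyπ).trans (by gcongr)
  rw [varV, varV, Measure.restrict_restrict measurableSet_Icc,
    ← integral_inter_add_sdiff measurableSet_Icc (integrableOn_fejerKernel n _)]
  gcongr
  calc ∫ y in Icc 0 π \ Icc 0 δ, fejerKernel n y ∂μ
      ≤ ∫ _ in Icc 0 π \ Icc 0 δ, π ^ 2 / δ ^ 2 ∂μ :=
        setIntegral_mono_on (integrableOn_fejerKernel n _) (integrableOn_const (measure_ne_top _ _))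
          (measurableSet_Icc.diff measurableSet_Icc) hfar
    _ ≤ π ^ 2 / δ ^ 2 * μ.real univ := by
        rw [setIntegral_const, smul_eq_mul, mul_comm]
        exact mul_le_mul_of_nonneg_left (measureReal_mono (subset_univ _)) (by positivity)

lemma specG_div_rpow_le {β κ x : ℝ} (hβ : 0 ≤ β) (hx : 0 < x) {a b : ℕ} (ha : (a : ℝ) ≤ π / x)
    (hb : π / x < b) (hba : (b : ℝ) ≤ κ * a) :
    specG μ x / x ^ β ≤ (κ / π) ^ β * ((a : ℝ) ^ β * specG μ (π / a)) := by
  have hκa : 0 < κ * a := ((div_pos pi_pos hx).trans hb).trans_le hba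
  have hκ : 0 < κ := pos_of_mul_pos_left hκa (Nat.cast_nonneg a)
  have ha0 : (0 : ℝ) < a := pos_of_mul_pos_right hκa hκ.le
  have hxa : x ≤ π / a := (le_div_comm₀ ha0 hx).1 ha
  have hxb : π / (κ * a) ≤ x := (div_le_comm₀ hκa hx).2 (hb.le.trans hba)
  calc specG μ x / x ^ β ≤ specG μ (π / a) / (π / (κ * a)) ^ β :=
        div_le_div₀ (specG_nonneg _) (specG_mono hxa) (by positivity)
          (rpow_le_rpow (by positivity) hxb hβ)
    _ = (κ / π) ^ β * ((a : ℝ) ^ β * specG μ (π / a)) := by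
        rw [div_rpow pi_pos.le hκa.le, mul_rpow hκ.le ha0.le, div_rpow hκ.le pi_pos.le]
        field_simp

lemma tendsto_specG_div_rpow {β κ : ℝ} (hβ : 0 ≤ β) {n : ℕ → ℕ} (hn : Tendsto n atTop atTop)
    (hκ : ∀ k, (n (k + 1) : ℝ) ≤ κ * n k)
    (h : Tendsto (fun k => (n k : ℝ) ^ β * specG μ (π / n k)) atTop (𝓝 0)) :
    Tendsto (fun x => specG μ x / x ^ β) (𝓝[>] 0) (𝓝 0) := by
  refine tendsto_zero_of_forall_eventually_le
    (eventually_nhdsWithin_of_forall fun x hx =>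
      div_nonneg (specG_nonneg x) (rpow_nonneg (le_of_lt hx) _))
    fun ε hε => ?_
  have hsmall : ∀ᶠ k in atTop, (κ / π) ^ β * ((n k : ℝ) ^ β * specG μ (π / n k)) ≤ ε :=
    (h.const_mul _).eventually (ge_mem_nhds (by rwa [mul_zero]))
  obtain ⟨K, hK⟩ := eventually_atTop.1 (hsmall.and (hn.eventually_gt_atTop 0))
  have hnK : (0 : ℝ) < n K := by exact_mod_cast (hK K le_rfl).2
  filter_upwards [Ioo_mem_nhdsGT (div_pos pi_pos hnK)] with x ⟨hx0, hxK⟩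
  obtain ⟨k, hkK, hk, hk1⟩ := exists_le_lt_succ_of_tendsto_atTop
    (tendsto_natCast_atTop_atTop.comp hn) ((le_div_comm₀ hx0 hnK).1 hxK.le)
  exact (specG_div_rpow_le hβ hx0 hk hk1 (hκ k)).trans (hK k hkK).1

lemma tendsto_rpow_mul_specG_of_tendsto_varV {γ : ℝ} {n : ℕ → ℕ} (hn : Tendsto n atTop atTop)
    (h : Tendsto (fun k => varV μ (n k) / (n k : ℝ) ^ γ) atTop (𝓝 0)) :
    Tendsto (fun k => (n k : ℝ) ^ (2 - γ) * specG μ (π / n k)) atTop (𝓝 0) := by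
  refine squeeze_zero' (Eventually.of_forall fun k => mul_nonneg (by positivity) (specG_nonneg _))
    ?_ (by simpa using h.const_mul (π ^ 2 / 4))
  filter_upwards [hn.eventually_gt_atTop 0] with k hk
  have hkR : (0 : ℝ) < n k := by exact_mod_cast hk
  calc (n k : ℝ) ^ (2 - γ) * specG μ (π / n k)
      = π ^ 2 / 4 * (4 / π ^ 2 * (n k : ℝ) ^ 2 * specG μ (π / n k) / (n k : ℝ) ^ γ) := by
        rw [rpow_sub hkR, rpow_two]; field_simp
    _ ≤ π ^ 2 / 4 * (varV μ (n k) / (n k : ℝ) ^ γ) := by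
        gcongr; exact sq_mul_specG_le_varV hk

lemma tendsto_varV_div_rpow {γ : ℝ} (hγ0 : 0 < γ) (hγ2 : γ ≤ 2)
    (h : Tendsto (fun x => specG μ x / x ^ (2 - γ)) (𝓝[>] 0) (𝓝 0)) :
    Tendsto (fun m : ℕ => varV μ m / (m : ℝ) ^ γ) atTop (𝓝 0) := by
  set C : ℝ := 1 + π ^ 2 * 2 ^ (2 - γ) / (1 - 2 ^ (2 - γ - 2))
  have hC : 0 < C := by
    have : (2 : ℝ) ^ (2 - γ - 2) < 1 := rpow_lt_one_of_one_lt_of_neg one_lt_two (by linarith)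
    have : 0 < 1 - (2 : ℝ) ^ (2 - γ - 2) := by linarith
    positivity
  refine tendsto_zero_of_forall_eventually_le
    (Eventually.of_forall fun m => div_nonneg (varV_nonneg m) (by positivity)) fun ε hε => ?_
  obtain ⟨δ, hδ, hG⟩ : ∃ δ > 0, ∀ x ∈ Ioo 0 δ, specG μ x / x ^ (2 - γ) ≤ ε / (2 * C) :=
    (nhdsGT_basis 0).eventually_iff.1 (h.eventually (ge_mem_nhds (by positivity)))
  have hν : ∀ x, 0 < x → specG (μ.restrict (Icc 0 (δ / 2))) x ≤ ε / (2 * C) * x ^ (2 - γ) :=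
    fun x hx => specG_restrict_le_of_forall_lt (by linarith) hδ
      (fun y hy => (div_le_iff₀ (rpow_pos_of_pos hy.1 _)).1 (hG y hy)) hx
  set B : ℝ := π ^ 2 / (δ / 2) ^ 2 * μ.real univ
  have htail : Tendsto (fun m : ℕ => B / (m : ℝ) ^ γ) atTop (𝓝 0) :=
    tendsto_const_nhds.div_atTop ((tendsto_rpow_atTop hγ0).comp tendsto_natCast_atTop_atTop)
  filter_upwards [eventually_gt_atTop 0, htail.eventually (ge_mem_nhds (half_pos hε))]
    with m hm hBm
  have hmγ : (0 : ℝ) < (m : ℝ) ^ γ := by positivity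
  have hhead := varV_le_of_specG_le_rpow (by linarith) hν hm
  rw [sub_sub_cancel] at hhead
  rw [div_le_iff₀ hmγ]
  calc varV μ m ≤ ε / (2 * C) * C * (m : ℝ) ^ γ + B / (m : ℝ) ^ γ * (m : ℝ) ^ γ := by
        rw [div_mul_cancel₀ _ hmγ.ne']
        exact (varV_le_varV_restrict_add (half_pos hδ) m).trans (by linarith)
    _ ≤ ε / (2 * C) * C * (m : ℝ) ^ γ + ε / 2 * (m : ℝ) ^ γ := by gcongr
    _ = ε * (m : ℝ) ^ γ := by field_simp; ring

end Spectral

theorem variance_null_tfae_general (μ : Measure ℝ) [IsFiniteMeasure μ]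
    (γ : ℝ) (hγ : γ ∈ Ioc (0 : ℝ) 2)
    (n : ℕ → ℕ)
    (htop : Tendsto n atTop atTop)
    (hratio : ∃ κ : ℝ, ∀ k, (n (k + 1) : ℝ) ≤ κ * (n k : ℝ)) :
    List.TFAE
      [Tendsto (fun k : ℕ => varV μ (n k) / (n k : ℝ) ^ γ) atTop (𝓝 0),
       Tendsto (fun x : ℝ => specG μ x / x ^ (2 - γ)) (𝓝[>] 0) (𝓝 0),
       Tendsto (fun m : ℕ => varV μ m / (m : ℝ) ^ γ) atTop (𝓝 0)] := by
  obtain ⟨hγ0, hγ2⟩ := hγ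
  obtain ⟨κ, hκ⟩ := hratio
  tfae_have 1 → 2 := fun h1 =>
    tendsto_specG_div_rpow (by linarith) htop hκ (tendsto_rpow_mul_specG_of_tendsto_varV htop h1)
  tfae_have 2 → 3 := tendsto_varV_div_rpow hγ0 hγ2
  tfae_have 3 → 1 := fun h3 => h3.comp htop
  tfae_finish

/-- For `γ ∈ (0,2]` and a nondecreasing integer sequence `n_k → ∞` with bounded ratios,
the following are equivalent: (1) `V(n_k)/n_k^γ → 0`; (2) `G(x)/x^{2-γ} → 0` as `x → 0⁺`;
(3) `V(n)/n^γ → 0`. -/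
theorem variance_null_tfae (μ : Measure ℝ) [IsFiniteMeasure μ]
    (hsupp : μ (Icc 0 Real.pi)ᶜ = 0)
    (γ : ℝ) (hγ : γ ∈ Ioc (0 : ℝ) 2)
    (n : ℕ → ℕ) (hpos : ∀ k, 0 < n k) (hmono : Monotone n)
    (htop : Tendsto n atTop atTop)
    (hratio : ∃ κ : ℝ, ∀ k, (n (k + 1) : ℝ) ≤ κ * (n k : ℝ)) :
    List.TFAE
      [Tendsto (fun k : ℕ => varV μ (n k) / (n k : ℝ) ^ γ) atTop (𝓝 0),
       Tendsto (fun x : ℝ => specG μ x / x ^ (2 - γ)) (𝓝[>] 0) (𝓝 0),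
       Tendsto (fun m : ℕ => varV μ m / (m : ℝ) ^ γ) atTop (𝓝 0)] :=
  variance_null_tfae_general μ γ hγ n htop hratio
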